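/- For the birth-death chain on {0,...,k} with stationary distribution π_i = ρ^i(1-ρ)/(1-ρ^{k+1}) where ρ = s/μ ∈ (0,1) ∪ (1,∞), the expected stationary quantity ∑ i·π_i is a strictly increasing function of ρ on (0,∞)\{1} (extended continuously at ρ=1 by value k/2). In particular, increasing the supply rate s while holding the purchase rate μ fixed strictly increases the expected stock level. -/

import Mathlib

open Finset

lemma cross_le {a b : ℝ} (ha : 0 < a) (hab : a ≤ b) {i j : ℕ} (hij : i ≤ j) :
    b ^ i * a ^ j ≤ b ^ j * a ^ i := by
  obtain ⟨d, rfl⟩ := Nat.exists_eq_add_of_le hij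
  have hb : 0 < b := ha.trans_le hab
  have hd : a ^ d ≤ b ^ d := pow_le_pow_left₀ ha.le hab d
  have h1 : (0:ℝ) ≤ b ^ i * a ^ i := by positivity
  calc b ^ i * a ^ (i + d) = b ^ i * a ^ i * a ^ d := by ring
    _ ≤ b ^ i * a ^ i * b ^ d := by nlinarith
    _ = b ^ (i + d) * a ^ i := by ring

lemma bd_key {a b : ℝ} (k : ℕ) (hk : 1 ≤ k) (ha : 0 < a) (hab : a < b) :
    0 < ∑ i ∈ range (k+1), ∑ j ∈ range (k+1), ((i:ℝ) - j) * (b ^ i * a ^ j) := by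
  set T := ∑ i ∈ range (k+1), ∑ j ∈ range (k+1), ((i:ℝ) - j) * (b ^ i * a ^ j) with hT
  have hswap : T = ∑ i ∈ range (k+1), ∑ j ∈ range (k+1), ((j:ℝ) - i) * (b ^ j * a ^ i) := by
    rw [hT, Finset.sum_comm]
  have hg : ∀ i ∈ range (k+1), ∀ j ∈ range (k+1),
      0 ≤ ((i:ℝ) - j) * (b ^ i * a ^ j) + ((j:ℝ) - i) * (b ^ j * a ^ i) := by
    intro i _ j _
    rcases le_total i j with h | h
    · have h1 : (i:ℝ) - j ≤ 0 := by
        have := (Nat.cast_le (α := ℝ)).mpr h; linarith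
      have h2 : b ^ i * a ^ j ≤ b ^ j * a ^ i := cross_le ha hab.le h
      nlinarith
    · have h1 : (0:ℝ) ≤ (i:ℝ) - j := by
        have := (Nat.cast_le (α := ℝ)).mpr h; linarith
      have h2 : b ^ j * a ^ i ≤ b ^ i * a ^ j := cross_le ha hab.le h
      nlinarith
  have h2T : 0 < 2 * T := by
    have : 2 * T = ∑ i ∈ range (k+1), ∑ j ∈ range (k+1),
        (((i:ℝ) - j) * (b ^ i * a ^ j) + ((j:ℝ) - i) * (b ^ j * a ^ i)) := by
      rw [two_mul]
      nth_rewrite 2 [hswap]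
      rw [hT, ← Finset.sum_add_distrib]
      refine sum_congr rfl fun i _ => ?_
      rw [← Finset.sum_add_distrib]
    rw [this]
    refine Finset.sum_pos' (fun i hi => Finset.sum_nonneg (fun j hj => hg i hi j hj)) ?_
    refine ⟨1, Finset.mem_range.mpr (by omega), ?_⟩
    refine Finset.sum_pos' (fun j hj => hg 1 (Finset.mem_range.mpr (by omega)) j hj) ?_
    refine ⟨0, Finset.mem_range.mpr (by omega), ?_⟩
    simp only [Nat.cast_one, Nat.cast_zero, pow_zero, pow_one]
    nlinarith
  linarith

lemma bd_mono (k : ℕ) (hk : 1 ≤ k) :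
    StrictMonoOn (fun ρ : ℝ =>
      (∑ i : Fin (k + 1), (i : ℝ) * ρ ^ (i : ℕ)) / (∑ i : Fin (k + 1), ρ ^ (i : ℕ)))
      (Set.Ioi (0 : ℝ)) := by
  intro a ha b hb hab
  simp only [Set.mem_Ioi] at ha hb
  dsimp only
  rw [Fin.sum_univ_eq_sum_range (fun i => (i:ℝ) * a ^ i) (k+1),
    Fin.sum_univ_eq_sum_range (fun i => (i:ℝ) * b ^ i) (k+1),
    Fin.sum_univ_eq_sum_range (fun i => a ^ i) (k+1),
    Fin.sum_univ_eq_sum_range (fun i => b ^ i) (k+1)]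
  have Da : 0 < ∑ i ∈ range (k+1), a ^ i :=
    Finset.sum_pos (fun i _ => pow_pos ha i) (by simp)
  have Db : 0 < ∑ i ∈ range (k+1), b ^ i :=
    Finset.sum_pos (fun i _ => pow_pos (ha.trans hab) i) (by simp)
  rw [div_lt_div_iff₀ Da Db]
  have h1 : (∑ i ∈ range (k+1), (i:ℝ) * b ^ i) * (∑ i ∈ range (k+1), a ^ i)
      = ∑ i ∈ range (k+1), ∑ j ∈ range (k+1), (i:ℝ) * b ^ i * a ^ j := by
    rw [Finset.sum_mul_sum]
  have h2 : (∑ i ∈ range (k+1), (i:ℝ) * a ^ i) * (∑ i ∈ range (k+1), b ^ i)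
      = ∑ i ∈ range (k+1), ∑ j ∈ range (k+1), (j:ℝ) * a ^ j * b ^ i := by
    rw [Finset.sum_mul_sum, Finset.sum_comm]
  have key := bd_key k hk ha hab
  have hdiff : (∑ i ∈ range (k+1), (i:ℝ) * b ^ i) * (∑ i ∈ range (k+1), a ^ i)
      - (∑ i ∈ range (k+1), (i:ℝ) * a ^ i) * (∑ i ∈ range (k+1), b ^ i)
      = ∑ i ∈ range (k+1), ∑ j ∈ range (k+1), ((i:ℝ) - j) * (b ^ i * a ^ j) := by
    rw [h1, h2, ← Finset.sum_sub_distrib]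
    refine sum_congr rfl fun i _ => ?_
    rw [← Finset.sum_sub_distrib]
    exact sum_congr rfl fun j _ => by ring
  linarith

lemma bd_one (k : ℕ) :
    (∑ i : Fin (k + 1), (i : ℝ) * (1:ℝ) ^ (i : ℕ)) / (∑ i : Fin (k + 1), (1:ℝ) ^ (i : ℕ))
      = (k : ℝ) / 2 := by
  rw [Fin.sum_univ_eq_sum_range (fun i => (i:ℝ) * (1:ℝ) ^ i) (k+1),
    Fin.sum_univ_eq_sum_range (fun i => (1:ℝ) ^ i) (k+1)]
  simp only [one_pow, mul_one, Finset.sum_const, card_range, nsmul_eq_mul]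
  have hs : (∑ i ∈ range (k+1), (i:ℝ)) = (k:ℝ) * (k+1) / 2 := by
    have h := Finset.sum_range_id_mul_two (k+1)
    simp only [Nat.add_sub_cancel] at h
    have h3 := congrArg (Nat.cast : ℕ → ℝ) h
    push_cast [Nat.cast_sum] at h3
    linarith
  rw [hs]
  have : (k:ℝ) + 1 ≠ 0 := by positivity
  field_simp
  push_cast
  ring

/-- The expected stationary quantity
`E(ρ) = (∑_{i=0}^k i ρ^i)/(∑_{i=0}^k ρ^i)` is strictly increasing in `ρ` on
`(0,∞)` (with `E(1) = k/2`). -/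
theorem bd_expected_strict_mono (k : ℕ) (hk : 1 ≤ k) :
    let E : ℝ → ℝ := fun ρ =>
      (∑ i : Fin (k + 1), (i : ℝ) * ρ ^ (i : ℕ)) / (∑ i : Fin (k + 1), ρ ^ (i : ℕ))
    StrictMonoOn E (Set.Ioi (0 : ℝ)) ∧ E 1 = (k : ℝ) / 2 := by
  exact ⟨bd_mono k hk, bd_one k⟩
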